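/- The ideal conv_2 on ω^2 + 1 is isomorphic to the ideal Fin ⊗ Fin on ω × ω. -/

import Mathlib

open Set Filter Topology Ordinal

noncomputable section

/-- The derived set of `A`: the set of accumulation (limit) points of `A`. -/
def derivSet {X : Type*} [TopologicalSpace X] (A : Set X) : Set X :=
  {p | p ∈ closure (A \ {p})}

/-- The ordinal space `ω^a + 1 = [0, ω^a]` with the (order) topology. -/
abbrev OrdSpace (a : Ordinal) : Type _ := ↥(Set.Iic (omega0 ^ a))

/-- The ideal `conv_a` on `ω^a + 1`: sets with finite derived set. -/
def convIdeal (a : Ordinal) : Set (Set (OrdSpace a)) :=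
  {A | (derivSet A).Finite}

/-- `I` is an ideal of subsets. -/
structure IsIdeal {S : Type*} (I : Set (Set S)) : Prop where
  empty_mem : ∅ ∈ I
  subset_mem : ∀ {A B : Set S}, A ⊆ B → B ∈ I → A ∈ I
  union_mem : ∀ {A B : Set S}, A ∈ I → B ∈ I → A ∪ B ∈ I

/-- The subsequence of `f` indexed by `A` converges to `x`. -/
def ConvAlong {X : Type*} [TopologicalSpace X] (f : ℕ → X) (A : Set ℕ) (x : X) : Prop :=
  ∀ U ∈ nhds x, {n ∈ A | f n ∉ U}.Finite

/-- Katětov order: `J ≤_K I`, where `I` lives on `X` and `J` on `Y`. -/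
def KatetovLE {X Y : Type*} (J : Set (Set Y)) (I : Set (Set X)) : Prop :=
  ∃ f : X → Y, ∀ A ∈ J, f ⁻¹' A ∈ I

/-- `X ∈ FinBW(I)`: every sequence in `X` has a convergent subsequence indexed
by an `I`-positive set. -/
def InFinBW (I : Set (Set ℕ)) (X : Type*) [TopologicalSpace X] : Prop :=
  ∀ f : ℕ → X, ∃ A : Set ℕ, A ∉ I ∧ ∃ x : X, ConvAlong f A x

/-! Send the `i`-th column of `ω × ω` onto the block `[ω * i, ω * i + ω)` and one spare point to
`ω ^ 2`. An accumulation point of a subset of `[0, ω ^ 2]` is a limit ordinal, hence `ω ^ 2` or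
some `ω * i + ω`, and `ω * i + ω` is one exactly when the set meets the `i`-th block in infinitely
many points. So the image of `A` has a finite derived set iff only finitely many columns of `A`
are infinite. -/

section DerivSet

variable {X Y : Type*} [TopologicalSpace X] [TopologicalSpace Y]

theorem derivSet_eq_derivedSet (A : Set X) : derivSet A = derivedSet A := by
  ext x
  rw [derivSet, mem_ofPred_eq, mem_derivedSet, accPt_principal_iff_clusterPt,
    mem_closure_iff_clusterPt]

theorem Topology.IsEmbedding.apply_mem_derivSet_image_iff {f : X → Y} (hf : IsEmbedding f)
    {A : Set X} {x : X} : f x ∈ derivSet (f '' A) ↔ x ∈ derivSet A := by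
  rw [derivSet, derivSet, mem_ofPred_eq, mem_ofPred_eq, hf.closure_eq_preimage_closure_image,
    mem_preimage, image_sdiff hf.injective, image_singleton]

theorem Topology.IsClosedEmbedding.derivSet_image {f : X → Y} (hf : IsClosedEmbedding f)
    (A : Set X) : derivSet (f '' A) = f '' derivSet A := by
  ext y
  constructor
  · intro hy
    have hy_range : y ∈ range f := by
      have : derivSet (f '' A) ⊆ closure (f '' A) := fun _ hp => closure_mono sdiff_subset hp
      exact hf.isClosed_range.closure_subset_iff.2 (image_subset_range f A) (this hy)
    obtain ⟨x, rfl⟩ := hy_range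
    exact ⟨x, hf.isEmbedding.apply_mem_derivSet_image_iff.1 hy, rfl⟩
  · rintro ⟨x, hx, rfl⟩
    exact hf.isEmbedding.apply_mem_derivSet_image_iff.2 hx

end DerivSet

namespace Ordinal

theorem omega0_opow_two : ω ^ (2 : Ordinal) = ω * ω := by
  rw [← one_add_one_eq_two, opow_add, opow_one]

theorem omega0_mul_add_natCast_lt (i n : ℕ) : ω * i + n < ω ^ (2 : Ordinal) := by
  rw [omega0_opow_two]
  calc ω * i + n < ω * i + ω := (add_lt_add_iff_left _).2 (natCast_lt_omega0 n)
    _ = ω * ↑(i + 1) := by push_cast; rw [mul_add_one]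
    _ < ω * ω := (mul_lt_mul_iff_right₀ omega0_pos).2 (natCast_lt_omega0 _)

theorem omega0_mul_add_natCast_injective :
    Function.Injective fun p : ℕ × ℕ => ω * p.1 + p.2 := by
  rintro ⟨i, n⟩ ⟨i', n'⟩ h
  have hdiv := congrArg (· / ω) h
  have hmod := congrArg (· % ω) h
  simp only [mul_add_div _ omega0_ne_zero, div_eq_zero_of_lt (natCast_lt_omega0 _), add_zero,
    mul_add_mod_self, mod_eq_of_lt (natCast_lt_omega0 _), Nat.cast_inj] at hdiv hmod
  rw [hdiv, hmod]

theorem exists_omega0_mul_add_natCast_eq {p : Ordinal} (hp : p < ω ^ (2 : Ordinal)) :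
    ∃ i n : ℕ, ω * i + n = p := by
  rw [omega0_opow_two] at hp
  obtain ⟨i, hi⟩ := lt_omega0.1 ((lt_mul_iff_div_lt omega0_ne_zero).1 hp)
  obtain ⟨n, hn⟩ := lt_omega0.1 (mod_lt p omega0_ne_zero)
  exact ⟨i, n, hi ▸ hn ▸ div_add_mod p ω⟩

theorem exists_omega0_mul_add_omega0_eq {p : Ordinal} (hp : Order.IsSuccLimit p)
    (hp' : p < ω ^ (2 : Ordinal)) : ∃ i : ℕ, ω * i + ω = p := by
  obtain ⟨i, n, rfl⟩ := exists_omega0_mul_add_natCast_eq hp'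
  rcases n with _ | k
  · rcases i with _ | i
    · simp at hp
    · exact ⟨i, by push_cast; rw [mul_add_one, add_zero]⟩
  · rw [Nat.cast_succ, ← add_assoc, ← Order.succ_eq_add_one] at hp
    exact absurd hp (Order.not_isSuccLimit_succ _)

theorem exists_add_natCast_eq_of_mem_Ico {a x : Ordinal} (hx : x ∈ Ico a (a + ω)) :
    ∃ n : ℕ, a + n = x := by
  obtain ⟨n, hn⟩ := lt_omega0.1 ((sub_lt_of_le hx.1).2 hx.2)
  exact ⟨n, hn ▸ Ordinal.add_sub_cancel_of_le hx.1⟩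

theorem accPt_add_omega0_iff (a : Ordinal) (S : Set Ordinal) :
    AccPt (a + ω) (𝓟 S) ↔ {n : ℕ | a + n ∈ S}.Infinite := by
  have hlt : ∀ b, b < a + ω ↔ ∃ m : ℕ, b ≤ a + m := fun b => by
    simp only [lt_add_iff omega0_ne_zero, lt_omega0]
    constructor
    · rintro ⟨_, ⟨m, rfl⟩, h⟩; exact ⟨m, h⟩
    · rintro ⟨m, h⟩; exact ⟨m, ⟨m, rfl⟩, h⟩
  rw [SuccOrder.accPt_principal]
  refine ⟨fun ⟨_, hS⟩ hfin => ?_, fun hinf => ⟨?_, fun b hb => ?_⟩⟩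
  · obtain ⟨N, hN⟩ := hfin.bddAbove
    obtain ⟨x, hxS, hNx, hxa⟩ := hS (a + N) ((hlt _).2 ⟨N, le_rfl⟩)
    obtain ⟨k, rfl⟩ := exists_add_natCast_eq_of_mem_Ico ⟨le_self_add.trans hNx.le, hxa⟩
    have : N < k := by exact_mod_cast (add_lt_add_iff_left a).1 hNx
    exact (hN hxS).not_gt this
  · exact (lt_add_of_pos_right a omega0_pos).not_isMin
  · obtain ⟨m, hm⟩ := (hlt b).1 hb
    obtain ⟨n, hnS, hmn⟩ := hinf.exists_gt m
    refine ⟨a + n, hnS, hm.trans_lt ?_, (add_lt_add_iff_left a).2 (natCast_lt_omega0 n)⟩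
    exact (add_lt_add_iff_left a).2 (by exact_mod_cast hmn)

theorem finite_derivedSet_iff_of_subset_Iic_omega0_sq {S : Set Ordinal}
    (hS : S ⊆ Iic (ω ^ (2 : Ordinal))) :
    (derivedSet S).Finite ↔ {i : ℕ | {n : ℕ | ω * i + n ∈ S}.Infinite}.Finite := by
  set f : ℕ → Ordinal := fun i => ω * i + ω
  have hf : Function.Injective f := by
    refine StrictMono.injective fun i j hij => ?_
    simp only [f, ← mul_add_one]
    exact (mul_lt_mul_iff_right₀ omega0_pos).2 (by exact_mod_cast Nat.add_lt_add_right hij 1)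
  have hsub : derivedSet S ⊆ insert (ω ^ (2 : Ordinal)) (f '' (f ⁻¹' derivedSet S)) := by
    intro p hp
    have hle : p ≤ ω ^ (2 : Ordinal) :=
      isClosed_Iic.closure_subset_iff.2 hS (derivedSet_subset_closure S hp)
    obtain rfl | hlt := hle.eq_or_lt
    · exact mem_insert _ _
    obtain ⟨i, rfl⟩ := exists_omega0_mul_add_omega0_eq (AccPt.isSuccLimit hp) hlt
    exact mem_insert_of_mem _ ⟨i, hp, rfl⟩
  have hpre : f ⁻¹' derivedSet S = {i : ℕ | {n : ℕ | ω * i + n ∈ S}.Infinite} := by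
    ext i
    exact accPt_add_omega0_iff _ S
  rw [← hpre]
  exact ⟨fun h => h.preimage hf.injOn, fun h => ((h.image f).insert _).subset hsub⟩

end Ordinal

theorem Nat.infinite_preimage_add_one_iff {s : Set ℕ} :
    ((· + 1) ⁻¹' s).Infinite ↔ s.Infinite := by
  change {n | n + 1 ∈ s}.Infinite ↔ {n | n ∈ s}.Infinite
  rw [← Nat.frequently_atTop_iff_infinite, ← Nat.frequently_atTop_iff_infinite,
    ← frequently_map (P := (· ∈ s)), map_add_atTop_eq_nat]

/- Column `i` is sent onto the block `[ω * i, ω * i + ω)`, except that column `0` is shifted up by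
one (via `colPos`) to free `(0, 0)` for the top point `ω ^ 2`. -/
def colPos : ℕ → ℕ → ℕ
  | 0, n => n + 1
  | _ + 1, n => n

theorem infinite_preimage_colPos_iff (i : ℕ) {s : Set ℕ} :
    (colPos i ⁻¹' s).Infinite ↔ s.Infinite := by
  cases i
  · exact Nat.infinite_preimage_add_one_iff
  · rfl

theorem eq_zero_or_exists_eq_colPos (q : ℕ × ℕ) : q = (0, 0) ∨ ∃ i n, q = (i, colPos i n) := by
  obtain ⟨_ | i, _ | n⟩ := q
  · exact Or.inl rfl
  · exact Or.inr ⟨0, n, rfl⟩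
  all_goals exact Or.inr ⟨i + 1, _, rfl⟩

def omegaSqEnum : ℕ × ℕ → Ordinal
  | (0, 0) => ω ^ (2 : Ordinal)
  | (0, n + 1) => n
  | (i + 1, n) => ω * ↑(i + 1) + n

@[simp]
theorem omegaSqEnum_colPos (i n : ℕ) : omegaSqEnum (i, colPos i n) = ω * i + n := by
  cases i <;> simp [omegaSqEnum, colPos]

theorem omegaSqEnum_le (q : ℕ × ℕ) : omegaSqEnum q ≤ ω ^ (2 : Ordinal) := by
  obtain rfl | ⟨i, n, rfl⟩ := eq_zero_or_exists_eq_colPos q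
  · exact le_rfl
  · exact (omegaSqEnum_colPos i n).symm ▸ (omega0_mul_add_natCast_lt i n).le

theorem omegaSqEnum_injective : Function.Injective omegaSqEnum := by
  have key : ∀ i n : ℕ, ω ^ (2 : Ordinal) ≠ omegaSqEnum (i, colPos i n) := fun i n => by
    simpa using (omega0_mul_add_natCast_lt i n).ne'
  intro q q' h
  obtain rfl | ⟨i, n, rfl⟩ := eq_zero_or_exists_eq_colPos q <;>
    obtain rfl | ⟨i', n', rfl⟩ := eq_zero_or_exists_eq_colPos q'
  · rfl
  · exact absurd h (key i' n')
  · exact absurd h.symm (key i n)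
  · simp only [omegaSqEnum_colPos] at h
    obtain ⟨rfl, rfl⟩ := Prod.ext_iff.1 (@omega0_mul_add_natCast_injective (i, n) (i', n') h)
    rfl

theorem exists_omegaSqEnum_eq {p : Ordinal} (hp : p ≤ ω ^ (2 : Ordinal)) :
    ∃ q, omegaSqEnum q = p := by
  obtain rfl | hlt := hp.eq_or_lt
  · exact ⟨(0, 0), rfl⟩
  · obtain ⟨i, n, rfl⟩ := exists_omega0_mul_add_natCast_eq hlt
    exact ⟨(i, colPos i n), omegaSqEnum_colPos i n⟩

theorem infinite_omega0_mul_add_mem_image_omegaSqEnum_iff (A : Set (ℕ × ℕ)) (i : ℕ) :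
    {n : ℕ | ω * i + n ∈ omegaSqEnum '' A}.Infinite ↔ {j : ℕ | (i, j) ∈ A}.Infinite := by
  simp only [← omegaSqEnum_colPos, omegaSqEnum_injective.mem_set_image]
  exact infinite_preimage_colPos_iff i (s := {j | (i, j) ∈ A})

def omegaSqEquiv : (ℕ × ℕ) ≃ OrdSpace 2 :=
  Equiv.ofBijective (fun q => ⟨omegaSqEnum q, omegaSqEnum_le q⟩)
    ⟨fun _ _ h => omegaSqEnum_injective (congrArg Subtype.val h),
      fun p => (exists_omegaSqEnum_eq p.2).imp fun _ hq => Subtype.ext hq⟩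

/-- `conv_2` is isomorphic to the ideal `Fin ⊗ Fin` on `ω × ω`. -/
theorem stmt6 :
    ∃ f : (ℕ × ℕ) ≃ OrdSpace 2,
      ∀ A : Set (ℕ × ℕ),
        ({i : ℕ | {j : ℕ | (i, j) ∈ A}.Infinite}.Finite
          ↔ (f '' A) ∈ convIdeal 2) := by
  refine ⟨omegaSqEquiv, fun A => ?_⟩
  have himage : Subtype.val '' (omegaSqEquiv '' A) = omegaSqEnum '' A := by
    rw [← image_comp]; rfl
  have hsub : omegaSqEnum '' A ⊆ Iic (ω ^ (2 : Ordinal)) :=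
    image_subset_iff.2 fun q _ => omegaSqEnum_le q
  rw [convIdeal, mem_ofPred_eq, ← finite_image_iff Subtype.val_injective.injOn,
    ← isClosed_Iic.isClosedEmbedding_subtypeVal.derivSet_image, himage, derivSet_eq_derivedSet,
    finite_derivedSet_iff_of_subset_Iic_omega0_sq hsub]
  simp only [infinite_omega0_mul_add_mem_image_omegaSqEnum_iff]
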